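/- arXiv:1806.10855 — 5 statements merged into one kernel-verified Lean document; each statement's English description precedes it below -/
import Mathlib

section
/- Fix integers n ≥ 1, L ≥ 1, nonnegative integers ν_1,…,ν_L and integers m_1,…,m_L with m_1 ≥ 2n+ν_1 and m_j ≥ n+ν_j+1 for 2 ≤ j ≤ L. Then for every i ∈ {1,…,n} and every integer j ≥ 1, the moments of the weight function w_i^{(L)} are given by ∫_0^∞ x^{j−1} w_i^{(L)}(x) dx = [Γ(ν_1+i+j−1) · Γ(m_1−2n−ν_1+1) / Γ(m_1−2n+i+j)] · ∏_{k=2}^{L} [Γ(ν_k+j) · Γ(m_k−n−ν_k) / Γ(m_k−n+j)]. -/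
/-! The recursion defining `w^{(l+1)}` is a multiplicative convolution of `w^{(l)}` with the
kernel `τ^{ν−1}(1−τ)^{m−n−ν−1}` on `(0,1)`. By Tonelli and the substitution `x = τ y`, the
`j`-th moment of `w^{(l+1)}` is the `j`-th moment of `w^{(l)}` times the Beta integral
`B(ν+j, m−n−ν)`, while the `j`-th moment of `w^{(1)}` is `B(ν_1+i+j−1, m_1−2n−ν_1+1)`; induction
on `L` and `B(s,t) = Γ(s)Γ(t)/Γ(s+t)` give the formula. Working with lower Lebesgue integrals
makes the exchange of integrals unconditional; the Bochner integral defining `w^{(l+1)}(x)` equals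
the lower one wherever the latter is finite, which holds for almost every `x > 0` because the
moments are finite. -/

open Finset MeasureTheory Real

/-- The weight functions `w_i^{(l)}`: `w_i^{(1)}(x) = x^{ν_1+i−1}(1−x)^{m_1−2n−ν_1}` on
`(0,1)` and `0` elsewhere, and recursively
`w_i^{(l+1)}(y) = ∫_0^1 τ^{ν_{l+1}−1}(1−τ)^{m_{l+1}−n−ν_{l+1}−1} w_i^{(l)}(y/τ) dτ`. -/
noncomputable def wFun (n : ℕ) (ν m : ℕ → ℕ) (i : ℕ) : ℕ → ℝ → ℝ
  | 0, _ => 0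
  | 1, x =>
      if 0 < x ∧ x < 1 then
        x ^ ((ν 1 : ℤ) + (i : ℤ) - 1) * (1 - x) ^ ((m 1 : ℤ) - 2 * (n : ℤ) - (ν 1 : ℤ))
      else 0
  | (l + 2), y =>
      ∫ τ in (0 : ℝ)..1,
        τ ^ ((ν (l + 2) : ℤ) - 1) * (1 - τ) ^ ((m (l + 2) : ℤ) - (n : ℤ) - (ν (l + 2) : ℤ) - 1) *
          wFun n ν m i (l + 1) (y / τ)

open ProbabilityTheory
open scoped ENNReal

lemma lintegral_Ioi_comp_div (f : ℝ → ℝ≥0∞) {c : ℝ} (hc : 0 < c) :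
    ∫⁻ x in Set.Ioi 0, f (x / c) = ENNReal.ofReal c * ∫⁻ x in Set.Ioi 0, f x := by
  have e := measurableEmbedding_mulRight₀ (inv_ne_zero hc.ne')
  have hpre : (· * c⁻¹) ⁻¹' Set.Ioi (0 : ℝ) = Set.Ioi 0 := by
    ext x
    simp [hc]
  simp_rw [div_eq_mul_inv]
  conv_lhs => rw [← hpre, ← e.lintegral_map, ← e.restrict_map,
    Real.map_volume_mul_right (inv_ne_zero hc.ne'), inv_inv, abs_of_pos hc,
    Measure.restrict_smul, lintegral_smul_measure, smul_eq_mul]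

lemma lintegral_Ioi_pow_mul_comp_div (f : ℝ → ℝ≥0∞) (k : ℕ) {c : ℝ} (hc : 0 < c) :
    ∫⁻ x in Set.Ioi 0, ENNReal.ofReal (x ^ k) * f (x / c) =
      ENNReal.ofReal (c ^ (k + 1)) * ∫⁻ x in Set.Ioi 0, ENNReal.ofReal (x ^ k) * f x := by
  have hscale (x : ℝ) : x ^ k = c ^ k * (x / c) ^ k := by
    rw [div_pow, mul_div_cancel₀ _ (pow_ne_zero k hc.ne')]
  rw [setLIntegral_congr_fun measurableSet_Ioi fun x _ => by
      rw [hscale x, ENNReal.ofReal_mul (pow_nonneg hc.le k), mul_assoc],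
    lintegral_Ioi_comp_div (fun y => ENNReal.ofReal (c ^ k) * (ENNReal.ofReal (y ^ k) * f y)) hc,
    lintegral_const_mul' _ _ ENNReal.ofReal_ne_top, ← mul_assoc, ← ENNReal.ofReal_mul hc.le,
    pow_succ', mul_comm c]

theorem lintegral_Ioi_pow_mul_lintegral_comp_div {f g : ℝ → ℝ≥0∞} (hf : Measurable f)
    (hg : Measurable g) {S : Set ℝ} (hS : MeasurableSet S) (hS0 : S ⊆ Set.Ioi 0) (k : ℕ) :
    ∫⁻ x in Set.Ioi 0, ENNReal.ofReal (x ^ k) * ∫⁻ τ in S, g τ * f (x / τ) =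
      (∫⁻ τ in S, ENNReal.ofReal (τ ^ (k + 1)) * g τ) *
        ∫⁻ x in Set.Ioi 0, ENNReal.ofReal (x ^ k) * f x := by
  have hF : Measurable fun p : ℝ × ℝ => ENNReal.ofReal (p.1 ^ k) * (g p.2 * f (p.1 / p.2)) := by
    fun_prop
  calc _ = ∫⁻ x in Set.Ioi 0, ∫⁻ τ in S, ENNReal.ofReal (x ^ k) * (g τ * f (x / τ)) :=
        lintegral_congr fun x => (lintegral_const_mul _ (by fun_prop)).symm
    _ = ∫⁻ τ in S, ∫⁻ x in Set.Ioi 0, ENNReal.ofReal (x ^ k) * (g τ * f (x / τ)) :=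
        lintegral_lintegral_swap hF.aemeasurable
    _ = ∫⁻ τ in S, ENNReal.ofReal (τ ^ (k + 1)) * g τ *
          ∫⁻ x in Set.Ioi 0, ENNReal.ofReal (x ^ k) * f x := by
        refine setLIntegral_congr_fun hS fun τ hτ => ?_
        simp_rw [mul_left_comm _ (g τ)]
        rw [lintegral_const_mul _ (by fun_prop), lintegral_Ioi_pow_mul_comp_div f k (hS0 hτ),
          mul_left_comm, mul_assoc]
    _ = _ := lintegral_mul_const _ (by fun_prop)

lemma lintegral_mul_ofReal_toReal {α : Type*} [MeasurableSpace α] {μ : Measure α}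
    {h G : α → ℝ≥0∞} (hm : AEMeasurable (fun a => h a * G a) μ)
    (hfin : ∫⁻ a, h a * G a ∂μ ≠ ⊤) :
    ∫⁻ a, h a * ENNReal.ofReal (G a).toReal ∂μ = ∫⁻ a, h a * G a ∂μ := by
  refine lintegral_congr_ae ?_
  filter_upwards [ae_lt_top' hm hfin] with a ha
  rcases eq_or_ne (h a) 0 with h0 | h0
  · simp [h0]
  · rw [ENNReal.ofReal_toReal (ENNReal.lt_top_of_mul_ne_top_right ha.ne h0).ne]

lemma lintegral_Ioo_rpow_mul_one_sub_rpow {α β : ℝ} (hα : 0 < α) (hβ : 0 < β) :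
    ∫⁻ x in Set.Ioo 0 1, ENNReal.ofReal (x ^ (α - 1) * (1 - x) ^ (β - 1)) =
      ENNReal.ofReal (beta α β) := by
  have h := lintegral_betaPDF_eq_one hα hβ
  have hB := beta_pos hα hβ
  simp_rw [lintegral_betaPDF, mul_assoc, ENNReal.ofReal_mul (one_div_pos.2 hB).le] at h
  rwa [lintegral_const_mul' _ _ ENNReal.ofReal_ne_top, ENNReal.ofReal_div_of_pos hB,
    ENNReal.ofReal_one, one_div, ← ENNReal.div_eq_inv_mul,
    ENNReal.div_eq_one_iff (by simpa using hB) ENNReal.ofReal_ne_top] at h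

lemma lintegral_Ioo_pow_mul_zpow_mul_one_sub_zpow (k : ℕ) {a b : ℤ} (ha : 0 < k + a + 1)
    (hb : 0 ≤ b) :
    ∫⁻ x in Set.Ioo 0 1, ENNReal.ofReal (x ^ k) * ENNReal.ofReal (x ^ a * (1 - x) ^ b) =
      ENNReal.ofReal (beta (k + a + 1) (b + 1)) := by
  rw [← lintegral_Ioo_rpow_mul_one_sub_rpow (by exact_mod_cast ha) (by positivity)]
  refine setLIntegral_congr_fun measurableSet_Ioo fun x hx => ?_
  rw [← ENNReal.ofReal_mul (pow_nonneg hx.1.le k), ← mul_assoc, add_sub_cancel_right,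
    add_sub_cancel_right, ← Real.rpow_natCast, ← Real.rpow_intCast, ← Real.rpow_intCast,
    ← Real.rpow_add hx.1]

noncomputable def wKernel (n : ℕ) (ν m : ℕ → ℕ) (l : ℕ) (τ : ℝ) : ℝ :=
  τ ^ ((ν l : ℤ) - 1) * (1 - τ) ^ ((m l : ℤ) - (n : ℤ) - (ν l : ℤ) - 1)

@[fun_prop]
lemma measurable_wKernel (n : ℕ) (ν m : ℕ → ℕ) (l : ℕ) : Measurable (wKernel n ν m l) := by
  unfold wKernel
  fun_prop

section wFun

variable {n : ℕ} {ν m : ℕ → ℕ} {i : ℕ}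

lemma wKernel_nonneg (l : ℕ) {τ : ℝ} (h0 : 0 ≤ τ) (h1 : τ ≤ 1) : 0 ≤ wKernel n ν m l τ :=
  mul_nonneg (zpow_nonneg h0 _) (zpow_nonneg (sub_nonneg.2 h1) _)

lemma beta_wKernel_pos (k l : ℕ) (hm : n + ν l + 1 ≤ m l) :
    0 < beta ((ν l : ℝ) + k + 1) ((m l : ℝ) - n - ν l) :=
  beta_pos (by positivity) (by rw [sub_sub, sub_pos]; exact_mod_cast (by omega))

lemma wFun_add_two (l : ℕ) (y : ℝ) :
    wFun n ν m i (l + 2) y =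
      ∫ τ in (0 : ℝ)..1, wKernel n ν m (l + 2) τ * wFun n ν m i (l + 1) (y / τ) :=
  rfl

@[fun_prop]
theorem measurable_wFun : ∀ l, Measurable (wFun n ν m i l)
  | 0 => measurable_const
  | 1 => Measurable.ite measurableSet_Ioo (by fun_prop) measurable_const
  | l + 2 => by
    have hW : Measurable (wFun n ν m i (l + 1)) := measurable_wFun (l + 1)
    simp_rw [funext (wFun_add_two l), intervalIntegral.integral_of_le zero_le_one]
    exact (StronglyMeasurable.integral_prod_right' (f := fun p : ℝ × ℝ =>
      wKernel n ν m (l + 2) p.2 * wFun n ν m i (l + 1) (p.1 / p.2)) (by fun_prop)).measurable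

theorem wFun_nonneg : ∀ l x, 0 ≤ wFun n ν m i l x
  | 0, _ => le_rfl
  | 1, x => by
    unfold wFun
    split_ifs with h
    · exact mul_nonneg (zpow_nonneg h.1.le _) (zpow_nonneg (sub_nonneg.2 h.2.le) _)
    · exact le_rfl
  | l + 2, y => intervalIntegral.integral_nonneg zero_le_one fun τ hτ =>
      mul_nonneg (wKernel_nonneg _ hτ.1 hτ.2) (wFun_nonneg _ _)

lemma wFun_add_two_eq_toReal_lintegral (l : ℕ) (y : ℝ) :
    wFun n ν m i (l + 2) y = (∫⁻ τ in Set.Ioo 0 1, ENNReal.ofReal (wKernel n ν m (l + 2) τ) *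
      ENNReal.ofReal (wFun n ν m i (l + 1) (y / τ))).toReal := by
  rw [wFun_add_two, intervalIntegral.integral_of_le zero_le_one, integral_Ioc_eq_integral_Ioo,
    integral_eq_lintegral_of_nonneg_ae]
  · exact congrArg ENNReal.toReal <| setLIntegral_congr_fun measurableSet_Ioo fun τ hτ =>
      ENNReal.ofReal_mul (wKernel_nonneg _ hτ.1.le hτ.2.le)
  · filter_upwards [ae_restrict_mem measurableSet_Ioo] with τ hτ
    exact mul_nonneg (wKernel_nonneg _ hτ.1.le hτ.2.le) (wFun_nonneg _ _)
  · fun_prop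

lemma lintegral_pow_mul_wFun_one (hi : 1 ≤ i) (hm1 : 2 * n + ν 1 ≤ m 1) (k : ℕ) :
    ∫⁻ x in Set.Ioi 0, ENNReal.ofReal (x ^ k) * ENNReal.ofReal (wFun n ν m i 1 x) =
      ENNReal.ofReal (beta ((ν 1 : ℝ) + i + k) ((m 1 : ℝ) - 2 * n - ν 1 + 1)) := by
  have hsupp : (Function.support fun x : ℝ =>
      ENNReal.ofReal (x ^ k) * ENNReal.ofReal (wFun n ν m i 1 x)) ⊆ Set.Ioo 0 1 := by
    intro x hx
    by_contra hx'
    have hx' : ¬(0 < x ∧ x < 1) := hx'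
    exact hx (by simp [wFun, if_neg hx'])
  rw [setLIntegral_eq_of_support_subset (hsupp.trans Set.Ioo_subset_Ioi_self),
    ← setLIntegral_eq_of_support_subset hsupp,
    setLIntegral_congr_fun measurableSet_Ioo fun x hx => by
      rw [wFun, if_pos (show 0 < x ∧ x < 1 from hx)],
    lintegral_Ioo_pow_mul_zpow_mul_one_sub_zpow _ (by omega) (by omega)]
  congr 2 <;> push_cast <;> ring

lemma lintegral_pow_succ_mul_wKernel (k l : ℕ) (hm : n + ν l + 1 ≤ m l) :
    ∫⁻ τ in Set.Ioo 0 1, ENNReal.ofReal (τ ^ (k + 1)) * ENNReal.ofReal (wKernel n ν m l τ) =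
      ENNReal.ofReal (beta ((ν l : ℝ) + k + 1) ((m l : ℝ) - n - ν l)) := by
  simp only [wKernel]
  rw [lintegral_Ioo_pow_mul_zpow_mul_one_sub_zpow _ (by omega) (by omega)]
  congr 2 <;> push_cast <;> ring

theorem lintegral_pow_mul_wFun (hi : 1 ≤ i) (hm1 : 2 * n + ν 1 ≤ m 1) (k : ℕ) {L : ℕ}
    (hL : 1 ≤ L) (hm : ∀ l, 2 ≤ l → l ≤ L → n + ν l + 1 ≤ m l) :
    ∫⁻ x in Set.Ioi 0, ENNReal.ofReal (x ^ k) * ENNReal.ofReal (wFun n ν m i L x) =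
      ENNReal.ofReal (beta ((ν 1 : ℝ) + i + k) ((m 1 : ℝ) - 2 * n - ν 1 + 1) *
        ∏ l ∈ Icc 2 L, beta ((ν l : ℝ) + k + 1) ((m l : ℝ) - n - ν l)) := by
  induction L, hL using Nat.le_induction with
  | base => simpa using lintegral_pow_mul_wFun_one hi hm1 k
  | succ L hL ih =>
    obtain ⟨L, rfl⟩ : ∃ L', L = L' + 1 := ⟨L - 1, by omega⟩
    have hmL := hm (L + 2) (by omega) le_rfl
    have hconv := lintegral_Ioi_pow_mul_lintegral_comp_div
      (f := fun y => ENNReal.ofReal (wFun n ν m i (L + 1) y))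
      (g := fun τ => ENNReal.ofReal (wKernel n ν m (L + 2) τ)) (by fun_prop) (by fun_prop)
      (S := Set.Ioo 0 1) measurableSet_Ioo Set.Ioo_subset_Ioi_self k
    rw [lintegral_pow_succ_mul_wKernel k _ hmL, ih fun l hl hlL => hm l hl (by omega),
      ← ENNReal.ofReal_mul (beta_wKernel_pos k _ hmL).le] at hconv
    simp_rw [wFun_add_two_eq_toReal_lintegral]
    rw [lintegral_mul_ofReal_toReal (by fun_prop) (hconv ▸ ENNReal.ofReal_ne_top), hconv,
      prod_Icc_succ_top (by omega : 2 ≤ L + 2), mul_comm, mul_assoc]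

end wFun

theorem stmt7_general (n L : ℕ) (hL : 1 ≤ L) (ν m : ℕ → ℕ)
    (hm1 : 2 * n + ν 1 ≤ m 1) (hmj : ∀ j, 2 ≤ j → j ≤ L → n + ν j + 1 ≤ m j)
    (i : ℕ) (hi1 : 1 ≤ i) (j : ℕ) (hj : 1 ≤ j) :
    ∫ x in Set.Ioi (0 : ℝ), x ^ (j - 1) * wFun n ν m i L x =
      Real.Gamma ((ν 1 : ℝ) + i + j - 1) * Real.Gamma ((m 1 : ℝ) - 2 * n - ν 1 + 1) /
          Real.Gamma ((m 1 : ℝ) - 2 * n + i + j) *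
        ∏ k ∈ Finset.Icc 2 L,
          Real.Gamma ((ν k : ℝ) + j) * Real.Gamma ((m k : ℝ) - n - ν k) /
            Real.Gamma ((m k : ℝ) - n + j) := by
  obtain ⟨k, rfl⟩ : ∃ k, j = k + 1 := ⟨j - 1, by omega⟩
  have hm1' : (2 * n + ν 1 : ℝ) ≤ m 1 := by exact_mod_cast hm1
  have hmoment_nonneg : 0 ≤ beta ((ν 1 : ℝ) + i + k) ((m 1 : ℝ) - 2 * n - ν 1 + 1) *
      ∏ l ∈ Icc 2 L, beta ((ν l : ℝ) + k + 1) ((m l : ℝ) - n - ν l) :=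
    mul_nonneg (beta_pos (by positivity) (by linarith)).le <| prod_nonneg fun l hl =>
      (beta_wKernel_pos k l (hmj l (mem_Icc.1 hl).1 (mem_Icc.1 hl).2)).le
  rw [integral_eq_lintegral_of_nonneg_ae, Nat.add_sub_cancel]
  · simp_rw [ENNReal.ofReal_mul' (wFun_nonneg _ _)]
    rw [lintegral_pow_mul_wFun hi1 hm1 k hL hmj, ENNReal.toReal_ofReal hmoment_nonneg]
    simp only [beta]
    push_cast
    ring_nf
  · filter_upwards [ae_restrict_mem measurableSet_Ioi] with x hx
    exact mul_nonneg (pow_nonneg (le_of_lt hx) _) (wFun_nonneg _ _)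
  · fun_prop

/-- the moments of the weight function `w_i^{(L)}`. -/
theorem stmt7 (n L : ℕ) (hn : 1 ≤ n) (hL : 1 ≤ L) (ν m : ℕ → ℕ)
    (hm1 : 2 * n + ν 1 ≤ m 1) (hmj : ∀ j, 2 ≤ j → j ≤ L → n + ν j + 1 ≤ m j)
    (i : ℕ) (hi1 : 1 ≤ i) (hin : i ≤ n) (j : ℕ) (hj : 1 ≤ j) :
    ∫ x in Set.Ioi (0 : ℝ), x ^ (j - 1) * wFun n ν m i L x =
      Real.Gamma ((ν 1 : ℝ) + i + j - 1) * Real.Gamma ((m 1 : ℝ) - 2 * n - ν 1 + 1) /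
          Real.Gamma ((m 1 : ℝ) - 2 * n + i + j) *
        ∏ k ∈ Finset.Icc 2 L,
          Real.Gamma ((ν k : ℝ) + j) * Real.Gamma ((m k : ℝ) - n - ν k) /
            Real.Gamma ((m k : ℝ) - n + j) :=
  stmt7_general n L hL ν m hm1 hmj i hi1 j hj
end

section
/- Let k ≥ 0, ν ≥ 0, M ≥ ν be integers and let u > 0 be a real number. Then Σ_{j=0}^k [(−1)^{k−j} / ((k−j)! · j!)] · [Γ(M+j+k+1)/Γ(ν+1+j)] · [Γ(ν+j+u)/Γ(M+j+u+1)] = [(−1)^k / k!] · [Γ(u+ν)/Γ(1+ν)] · [Γ(M+k+1)/Γ(M+u+1)] · [(u−k)_k · (ν−M−k)_k] / [(1+ν)_k · (u+M+1)_k], where (a)_k = a(a+1)⋯(a+k−1) denotes the Pochhammer symbol (with (a)_0 = 1). -/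
open Finset Real

/-- Pochhammer symbol `(a)_k = a (a+1) ⋯ (a+k-1)` (with `(a)_0 = 1`). -/
noncomputable def poch (a : ℝ) (k : ℕ) : ℝ := ∏ i ∈ Finset.range k, (a + i)

/-!
Write `a = ν + 1`, `x = u + ν`, `d = M - ν`. Turning the Gamma quotients into Pochhammer symbols
and clearing the common denominator `k! (x)_{d+1+k}`, both sides become polynomials of degree
at most `k` in `x`. The right side vanishes at `x = a + s` for `s < k`; there each summand on the
left is `(a+s)_{d+k+1}` times a polynomial of degree `k - 1` in the summation index `j`, so the
alternating binomial sum is a `k`-th finite difference and vanishes too. At `x = -(d + k)` only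
the last summand survives and the two sides agree by a direct computation. Agreement at these
`k + 1` points forces the identity.
-/

open Polynomial
open scoped Nat

lemma poch_add (x : ℝ) (m n : ℕ) : poch x (m + n) = poch x m * poch (x + m) n := by
  simp only [poch, prod_range_add, Nat.cast_add, add_assoc]

lemma poch_pos {x : ℝ} (hx : 0 < x) (n : ℕ) : 0 < poch x n :=
  prod_pos fun _ _ => by positivity

lemma poch_neg_natCast_eq_zero {m n : ℕ} (h : m < n) : poch (-m) n = 0 :=
  prod_eq_zero (mem_range.2 h) (neg_add_cancel _)

lemma poch_one_sub_sub (b : ℝ) (n : ℕ) : poch (1 - b - n) n = (-1) ^ n * poch b n := by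
  rw [poch, ← prod_range_reflect, poch, ← card_range n, ← prod_const, card_range,
    ← prod_mul_distrib]
  refine prod_congr rfl fun i hi => ?_
  have hi := mem_range.1 hi
  rw [Nat.cast_sub (by omega), Nat.cast_sub (by omega)]
  push_cast
  ring

lemma Gamma_add_nat_eq_mul_poch {y : ℝ} (hy : 0 < y) (n : ℕ) :
    Gamma (y + n) = Gamma y * poch y n := by
  induction n with
  | zero => simp [poch]
  | succ n ih =>
    rw [Nat.cast_succ, ← add_assoc, Gamma_add_one (by positivity : 0 < y + n).ne', ih, poch, poch,
      prod_range_succ]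
    ring

noncomputable def pochPoly (b : ℝ) (n : ℕ) : ℝ[X] := ∏ i ∈ range n, (X + C (b + i))

lemma eval_pochPoly (b x : ℝ) (n : ℕ) : (pochPoly b n).eval x = poch (x + b) n := by
  simp [pochPoly, poch, eval_prod, add_assoc]

lemma natDegree_pochPoly_le (b : ℝ) (n : ℕ) : (pochPoly b n).natDegree ≤ n :=
  (natDegree_prod_le _ _).trans <| by
    simp only [natDegree_X_add_C, sum_const, card_range, smul_eq_mul, mul_one, le_refl]

lemma sum_range_alternating_choose_mul_eval_eq_zero {R : Type*} [CommRing R] {Q : R[X]} {k : ℕ}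
    (hQ : Q.natDegree < k) :
    ∑ j ∈ range (k + 1), (-1) ^ (k - j) * (k.choose j : R) * Q.eval (j : R) = 0 := by
  have := congr_fun (fwdDiff_iter_eq_zero_of_degree_lt hQ) 0
  rw [fwdDiff_iter_eq_sum_shift] at this
  simpa [zsmul_eq_mul] using this

lemma poch_add_add_mul_comm (a : ℝ) (s j m n p : ℕ) :
    poch (a + j) (s + m + n) * poch (a + s) j * poch (a + s + j + m) p =
      poch (a + s) (j + m + p) * (poch (a + j) s * poch (a + j + s + m) n) := by
  simp only [poch_add, Nat.cast_add, ← add_assoc, add_right_comm a (j : ℝ) s]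
  ring

-- The left side of the summation, multiplied by `k! (x)_{d+1+k}`, as a polynomial in `x`.
noncomputable def saalschutzPoly (a : ℝ) (d k : ℕ) : ℝ[X] :=
  ∑ j ∈ range (k + 1), C ((-1) ^ (k - j) * k.choose j * poch (a + j) (d + k)) *
    (pochPoly 0 j * pochPoly ((d : ℝ) + 1 + j) (k - j))

lemma eval_saalschutzPoly (a x : ℝ) (d k : ℕ) :
    (saalschutzPoly a d k).eval x = ∑ j ∈ range (k + 1),
      (-1) ^ (k - j) * k.choose j * poch (a + j) (d + k) *
        (poch x j * poch (x + (d + 1 + j)) (k - j)) := by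
  simp only [saalschutzPoly, eval_finsetSum, eval_mul, eval_C, eval_pochPoly, add_zero]

lemma natDegree_saalschutzPoly_le (a : ℝ) (d k : ℕ) :
    (saalschutzPoly a d k).natDegree ≤ k := by
  refine natDegree_sum_le_of_forall_le _ _ fun j hj => ?_
  refine (natDegree_C_mul_le _ _).trans (natDegree_mul_le.trans ?_)
  have := mem_range.1 hj
  have := natDegree_pochPoly_le 0 j
  have := natDegree_pochPoly_le ((d : ℝ) + 1 + j) (k - j)
  omega

lemma eval_saalschutzPoly_add_nat (a : ℝ) (d : ℕ) {k s : ℕ} (hs : s < k) :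
    (saalschutzPoly a d k).eval (a + s) = 0 := by
  set Q := pochPoly a s * pochPoly (a + s + (d + 1)) (k - 1 - s)
  have hQ : Q.natDegree < k := calc
    Q.natDegree ≤ s + (k - 1 - s) :=
      natDegree_mul_le.trans (add_le_add (natDegree_pochPoly_le _ _) (natDegree_pochPoly_le _ _))
    _ < k := by omega
  rw [eval_saalschutzPoly]
  calc _ = ∑ j ∈ range (k + 1), poch (a + s) (d + k + 1) *
        ((-1) ^ (k - j) * k.choose j * Q.eval (j : ℝ)) := sum_congr rfl fun j hj => ?_
    _ = 0 := by rw [← mul_sum, sum_range_alternating_choose_mul_eval_eq_zero hQ, mul_zero]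
  have hj := mem_range.1 hj
  have := poch_add_add_mul_comm a s j (d + 1) (k - 1 - s) (k - j)
  rw [show s + (d + 1) + (k - 1 - s) = d + k by omega,
    show j + (d + 1) + (k - j) = d + k + 1 by omega] at this
  simp only [Q, eval_mul, eval_pochPoly]
  rw [add_comm (j : ℝ) a,
    show (j : ℝ) + (a + s + (d + 1)) = a + j + s + (d + 1 : ℕ) by push_cast; ring,
    show a + s + (d + 1 + j) = a + s + j + (d + 1 : ℕ) by push_cast; ring]
  linear_combination (-1) ^ (k - j) * k.choose j * this

lemma eval_saalschutzPoly_neg (a : ℝ) (d k : ℕ) :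
    (saalschutzPoly a d k).eval (-((d : ℝ) + k)) =
      poch (a + k) (d + k) * poch (-((d : ℝ) + k)) k := by
  rw [eval_saalschutzPoly, sum_range_succ, sum_eq_zero, zero_add]
  · simp [poch]
  · intro j hj
    have hj := mem_range.1 hj
    have hzero : poch (-(d + k) + (d + 1 + j)) (k - j) = 0 := by
      convert poch_neg_natCast_eq_zero (show k - 1 - j < k - j by omega) using 2
      rw [show k - 1 - j = k - (1 + j) by omega, Nat.cast_sub (by omega)]
      push_cast
      ring
    rw [hzero, mul_zero, mul_zero]

theorem saalschutzPoly_eq {a : ℝ} (ha : 0 < a) (d k : ℕ) :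
    saalschutzPoly a d k =
      C ((-1) ^ k * poch (a + k) d * poch (-((d : ℝ) + k)) k) * pochPoly (1 - a - k) k := by
  set S : Finset ℝ := insert (-(d + k : ℝ)) ((range k).image fun s : ℕ => a + s)
  have hS : #S = k + 1 := by
    rw [card_insert_of_notMem,
      card_image_of_injective _ fun _ _ h => by exact_mod_cast add_left_cancel h, card_range]
    simp only [mem_image, mem_range, not_exists, not_and]
    intro s _ h
    have : (0 : ℝ) ≤ d + k + s := by positivity
    linarith
  have hdeg : ∀ p : ℝ[X], p.natDegree ≤ k → p.degree < #S := fun p hp => by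
    rw [hS]; exact (degree_le_of_natDegree_le hp).trans_lt (by exact_mod_cast k.lt_succ_self)
  refine eq_of_degrees_lt_of_eval_finset_eq S (hdeg _ (natDegree_saalschutzPoly_le a d k))
    (hdeg _ ((natDegree_C_mul_le _ _).trans (natDegree_pochPoly_le _ _))) fun x hx => ?_
  rw [eval_mul, eval_C, eval_pochPoly]
  rcases mem_insert.1 hx with rfl | hx
  · rw [eval_saalschutzPoly_neg, show -((d : ℝ) + k) + (1 - a - k) = 1 - (a + k + d) - k by ring,
      poch_one_sub_sub, poch_add]
    have h : ((-1 : ℝ)) ^ k * (-1) ^ k = 1 := by rw [← mul_pow]; norm_num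
    linear_combination (-(poch (a + k) d * poch (a + k + d) k * poch (-((d : ℝ) + k)) k)) * h
  · obtain ⟨s, hs, rfl⟩ := mem_image.1 hx
    rw [eval_saalschutzPoly_add_nat a d (mem_range.1 hs),
      show a + s + (1 - a - k) = -((k - (1 + s) : ℕ) : ℝ) by
        rw [Nat.cast_sub (by have := mem_range.1 hs; omega)]; push_cast; ring,
      poch_neg_natCast_eq_zero (by have := mem_range.1 hs; omega), mul_zero]

lemma Gamma_add_nat_div_Gamma {y : ℝ} (hy : 0 < y) (n : ℕ) :
    Gamma (y + n) / Gamma y = poch y n := by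
  rw [Gamma_add_nat_eq_mul_poch hy, mul_div_cancel_left₀ _ (Gamma_pos_of_pos hy).ne']

lemma Gamma_div_Gamma_mul_Gamma_add_nat_div_Gamma_add_nat {a x : ℝ} (ha : 0 < a) (hx : 0 < x)
    (m n : ℕ) : Gamma x / Gamma a * (Gamma (a + m) / Gamma (x + n)) = poch a m / poch x n := by
  have := (Gamma_pos_of_pos ha).ne'
  have := (Gamma_pos_of_pos hx).ne'
  have := (poch_pos hx n).ne'
  rw [Gamma_add_nat_eq_mul_poch ha, Gamma_add_nat_eq_mul_poch hx]
  field_simp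

theorem pfaff_saalschutz_poch {a x : ℝ} (ha : 0 < a) (hx : 0 < x) (d k : ℕ) :
    ∑ j ∈ range (k + 1), (-1) ^ (k - j) / ((k - j)! * j !) * poch (a + j) (d + k) /
        poch (x + j) (d + 1) =
      (-1) ^ k / k ! * (poch a (d + k) / poch x (d + 1)) *
        (poch (x + (1 - a - k)) k * poch (-((d : ℝ) + k)) k) /
          (poch a k * poch (x + (d + 1)) k) := by
  have key := congrArg (eval x) (saalschutzPoly_eq ha d k)
  rw [eval_mul, eval_C, eval_pochPoly] at key
  have hx' : 0 < x + (d + 1) := by positivity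
  calc _ = (saalschutzPoly a d k).eval x / (k ! * poch x (d + 1 + k)) := by
        rw [eval_saalschutzPoly, sum_div]
        refine sum_congr rfl fun j hj => ?_
        have hj : j ≤ k := Nat.lt_succ_iff.mp (mem_range.1 hj)
        have hsplit : poch x (d + 1 + k) =
            poch x j * poch (x + j) (d + 1) * poch (x + (d + 1 + j)) (k - j) := by
          rw [show d + 1 + k = j + (d + 1) + (k - j) by omega, poch_add, poch_add]
          push_cast; ring_nf
        have hfact : (k ! : ℝ) = k.choose j * j ! * (k - j)! := by
          rw [← Nat.choose_mul_factorial_mul_factorial hj]; push_cast; ring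
        have : (k.choose j : ℝ) ≠ 0 := by exact_mod_cast (Nat.choose_pos hj).ne'
        have := (poch_pos hx j).ne'
        have := (poch_pos (by positivity : 0 < x + j) (d + 1)).ne'
        have := (poch_pos (by positivity : 0 < x + (d + 1 + j)) (k - j)).ne'
        rw [hsplit, hfact]
        field_simp
    _ = _ := by
        have := (poch_pos ha k).ne'
        have := (poch_pos hx (d + 1)).ne'
        have := (poch_pos hx' k).ne'
        rw [key, add_comm d k, poch_add a k d, poch_add x (d + 1) k]
        push_cast
        field_simp

/-- the Pfaff–Saalschütz-type evaluation used to compute `Q_{s,k}`. -/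
theorem stmt9 (k ν M : ℕ) (hM : ν ≤ M) (u : ℝ) (hu : 0 < u) :
    ∑ j ∈ Finset.range (k + 1),
        ((-1 : ℝ) ^ (k - j) / ((Nat.factorial (k - j) : ℝ) * (Nat.factorial j : ℝ))) *
          (Real.Gamma ((M : ℝ) + j + k + 1) / Real.Gamma ((ν : ℝ) + 1 + j)) *
          (Real.Gamma ((ν : ℝ) + j + u) / Real.Gamma ((M : ℝ) + j + u + 1)) =
      ((-1 : ℝ) ^ k / (Nat.factorial k : ℝ)) *
        (Real.Gamma (u + ν) / Real.Gamma (1 + ν)) *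
        (Real.Gamma ((M : ℝ) + k + 1) / Real.Gamma ((M : ℝ) + u + 1)) *
        (poch (u - k) k * poch ((ν : ℝ) - M - k) k) /
          (poch (1 + ν) k * poch (u + (M : ℝ) + 1) k) := by
  obtain ⟨d, rfl⟩ := Nat.exists_eq_add_of_le hM
  have ha : (0 : ℝ) < 1 + ν := by positivity
  have hx : 0 < u + ν := by positivity
  have hΓ₁ (j : ℕ) : Gamma (((ν + d : ℕ) : ℝ) + j + k + 1) / Gamma (ν + 1 + j) =
      poch (1 + ν + j) (d + k) := by
    rw [← Gamma_add_nat_div_Gamma (by positivity)]; push_cast; ring_nf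
  have hΓ₂ (j : ℕ) : Gamma (ν + j + u) / Gamma (((ν + d : ℕ) : ℝ) + j + u + 1) =
      (poch (u + ν + j) (d + 1))⁻¹ := by
    rw [← Gamma_add_nat_div_Gamma (by positivity), inv_div]; push_cast; ring_nf
  simp only [hΓ₁, hΓ₂, ← div_eq_mul_inv]
  rw [show ((ν + d : ℕ) : ℝ) + k + 1 = 1 + ν + (d + k : ℕ) by push_cast; ring,
    show ((ν + d : ℕ) : ℝ) + u + 1 = u + ν + (d + 1 : ℕ) by push_cast; ring,
    mul_assoc ((-1 : ℝ) ^ k / k !), Gamma_div_Gamma_mul_Gamma_add_nat_div_Gamma_add_nat ha hx,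
    show (u : ℝ) - k = u + ν + (1 - (1 + ν) - k) by ring,
    show (ν : ℝ) - ↑(ν + d) - k = -(d + k) by push_cast; ring,
    show u + ↑(ν + d) + 1 = u + ν + (d + 1) by push_cast; ring]
  exact pfaff_saalschutz_poch ha hx d k
end

section
/- Fix reals 0 < a_1 < a_2 < 1. Let (q_t) be a sequence in (0,1) with q_t → 1, and let λ_1(t) ≥ λ_2(t) ≥ 0 be integer sequences such that q_t^{λ_1(t)+1} → a_1 and q_t^{λ_2(t)} → a_2. Then P_{q_t}(λ_1(t), λ_2(t)) / ((1−q_t)² · q_t^{λ_1(t)+λ_2(t)+1}) converges to 12·(a_2 − a_1)². That is, under the change of variables q^{λ_1+1} ↦ a_1, q^{λ_2} ↦ a_2, the Schur measure P_q converges as q → 1 to the Jacobi-ensemble density ρ(a_1,a_2) = 12(a_2−a_1)² on {0 ≤ a_1 ≤ a_2 ≤ 1}. -/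
/-!
Since `s_λ(q,q²) = q^{λ₁+λ₂} s_λ(1,q)` by homogeneity and
`s_λ(1,q) = (q^{λ₂} − q^{λ₁+1})/(1−q)`, the normalized weight is exactly
`(1+q)²(1+q+q²)(q^{λ₂} − q^{λ₁+1})²/q`, which tends to `2²·3·(a₂−a₁)²` as `q → 1`.
-/

open Filter

/-- The two-variable Schur polynomial
`s_{(l1,l2)}(u,v) = (u^{l1+1} v^{l2} − v^{l1+1} u^{l2})/(u−v)`. -/
noncomputable def s2 (l1 l2 : ℕ) (u v : ℝ) : ℝ :=
  (u ^ (l1 + 1) * v ^ l2 - v ^ (l1 + 1) * u ^ l2) / (u - v)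

/-- The Schur-measure weight
`P_q(λ1,λ2) = (1−q)(1−q²)²(1−q³) s_{(λ1,λ2)}(1,q) s_{(λ1,λ2)}(q,q²)`. -/
noncomputable def Pq (q : ℝ) (l1 l2 : ℕ) : ℝ :=
  (1 - q) * (1 - q ^ 2) ^ 2 * (1 - q ^ 3) * s2 l1 l2 1 q * s2 l1 l2 q (q ^ 2)

lemma s2_mul_mul (l1 l2 : ℕ) {c : ℝ} (hc : c ≠ 0) (u v : ℝ) :
    s2 l1 l2 (c * u) (c * v) = c ^ (l1 + l2) * s2 l1 l2 u v := by
  have hnum : (c * u) ^ (l1 + 1) * (c * v) ^ l2 - (c * v) ^ (l1 + 1) * (c * u) ^ l2 =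
      c * (c ^ (l1 + l2) * (u ^ (l1 + 1) * v ^ l2 - v ^ (l1 + 1) * u ^ l2)) := by ring
  rw [s2, s2, hnum, ← mul_sub, mul_div_mul_left _ _ hc, mul_div_assoc]

lemma s2_one_left (l1 l2 : ℕ) (q : ℝ) :
    s2 l1 l2 1 q = (q ^ l2 - q ^ (l1 + 1)) / (1 - q) := by
  simp [s2]

lemma Pq_div_eq {q : ℝ} (hq0 : q ≠ 0) (hq1 : q ≠ 1) (l1 l2 : ℕ) :
    Pq q l1 l2 / ((1 - q) ^ 2 * q ^ (l1 + l2 + 1)) =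
      (1 + q) ^ 2 * (1 + q + q ^ 2) * (q ^ l2 - q ^ (l1 + 1)) ^ 2 / q := by
  have h1q : 1 - q ≠ 0 := sub_ne_zero.mpr hq1.symm
  have hs : s2 l1 l2 q (q ^ 2) = q ^ (l1 + l2) * s2 l1 l2 1 q := by
    simpa [sq] using s2_mul_mul l1 l2 hq0 1 q
  rw [Pq, hs, s2_one_left]
  field_simp
  ring

theorem stmt10_general (a1 a2 : ℝ)
    (q : ℕ → ℝ) (hq : ∀ t, 0 < q t ∧ q t < 1)
    (hqlim : Tendsto q atTop (nhds 1))
    (l1 l2 : ℕ → ℕ)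
    (hlim1 : Tendsto (fun t => q t ^ (l1 t + 1)) atTop (nhds a1))
    (hlim2 : Tendsto (fun t => q t ^ (l2 t)) atTop (nhds a2)) :
    Tendsto
      (fun t => Pq (q t) (l1 t) (l2 t) / ((1 - q t) ^ 2 * q t ^ (l1 t + l2 t + 1)))
      atTop (nhds (12 * (a2 - a1) ^ 2)) := by
  have hform : (fun t => Pq (q t) (l1 t) (l2 t) / ((1 - q t) ^ 2 * q t ^ (l1 t + l2 t + 1))) =
      fun t => (1 + q t) ^ 2 * (1 + q t + q t ^ 2) * (q t ^ l2 t - q t ^ (l1 t + 1)) ^ 2 / q t :=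
    funext fun t => Pq_div_eq (hq t).1.ne' (hq t).2.ne (l1 t) (l2 t)
  rw [hform, show 12 * (a2 - a1) ^ 2 = (1 + 1) ^ 2 * (1 + 1 + 1 ^ 2) * (a2 - a1) ^ 2 / 1 by ring]
  exact ((((hqlim.const_add 1).pow 2).mul ((hqlim.const_add 1).add (hqlim.pow 2))).mul
    ((hlim2.sub hlim1).pow 2)).div hqlim one_ne_zero

/-- the Schur measure `P_q` converges, as `q → 1`, to the Jacobi-ensemble
density `ρ(a1,a2) = 12 (a2−a1)²` under the change of variables `q^{λ1+1} ↦ a1, q^{λ2} ↦ a2`. -/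
theorem stmt10 (a1 a2 : ℝ) (ha1 : 0 < a1) (ha12 : a1 < a2) (ha2 : a2 < 1)
    (q : ℕ → ℝ) (hq : ∀ t, 0 < q t ∧ q t < 1)
    (hqlim : Tendsto q atTop (nhds 1))
    (l1 l2 : ℕ → ℕ) (hl : ∀ t, l2 t ≤ l1 t)
    (hlim1 : Tendsto (fun t => q t ^ (l1 t + 1)) atTop (nhds a1))
    (hlim2 : Tendsto (fun t => q t ^ (l2 t)) atTop (nhds a2)) :
    Tendsto
      (fun t => Pq (q t) (l1 t) (l2 t) / ((1 - q t) ^ 2 * q t ^ (l1 t + l2 t + 1)))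
      atTop (nhds (12 * (a2 - a1) ^ 2)) :=
  stmt10_general a1 a2 q hq hqlim l1 l2 hlim1 hlim2
end

section
/- Let μ_1 ≥ μ_2 ≥ 0 be integers. Then ∫∫_{0 ≤ a_1 ≤ a_2 ≤ 1} 12(a_2−a_1)² · [s_{(μ_1,μ_2)}(a_1,a_2) / (μ_1−μ_2+1)] da_1 da_2 = ∏_{i=1}^{2} i(i+1) / ((μ_i−i+3)(μ_i−i+4)); equivalently, the expectation of s_{(μ_1,μ_2)}(a_1,a_2)/s_{(μ_1,μ_2)}(1,1) with respect to the density ρ(a_1,a_2) = 12(a_2−a_1)² on {0 ≤ a_1 ≤ a_2 ≤ 1} equals [2/((μ_1+2)(μ_1+3))]·[6/((μ_2+1)(μ_2+2))]. -/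
/-! Multiplying the Schur polynomial by the squared Vandermonde `(a₂ - a₁)²` cancels its
denominator, leaving four monomials `a₁^m a₂^n`. By Fubini each integrates over the triangle
`0 ≤ a₁ ≤ a₂ ≤ 1` to `1/((m+1)(m+n+2))`, and these four rational functions of `μ₁, μ₂` add up
to the stated product. -/

open MeasureTheory

open Set

abbrev unitTriangle : Set (ℝ × ℝ) := {p | 0 ≤ p.1 ∧ p.1 ≤ p.2 ∧ p.2 ≤ 1}

theorem measurableSet_unitTriangle : MeasurableSet unitTriangle :=
  (measurableSet_le measurable_const measurable_fst).inter <|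
    (measurableSet_le measurable_fst measurable_snd).inter
      (measurableSet_le measurable_snd measurable_const)

theorem unitTriangle_subset_Icc : unitTriangle ⊆ Icc (0, 0) (1, 1) :=
  fun _ ⟨h0, h12, h1⟩ => ⟨⟨h0, h0.trans h12⟩, h12.trans h1, h1⟩

theorem Continuous.integrableOn_unitTriangle {E : Type*} [NormedAddCommGroup E]
    {f : ℝ × ℝ → E} (hf : Continuous f) : IntegrableOn f unitTriangle :=
  hf.integrableOn_Icc.mono_set unitTriangle_subset_Icc

theorem setIntegral_unitTriangle {E : Type*} [NormedAddCommGroup E] [NormedSpace ℝ E]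
    {f : ℝ × ℝ → E} (hf : IntegrableOn f unitTriangle) :
    ∫ p in unitTriangle, f p = ∫ u in (0 : ℝ)..1, ∫ v in u..1, f (u, v) := by
  rw [← integral_indicator measurableSet_unitTriangle, Measure.volume_eq_prod,
    integral_prod _ ((integrable_indicator_iff measurableSet_unitTriangle).2 hf),
    intervalIntegral.integral_of_le zero_le_one, ← integral_Icc_eq_integral_Ioc,
    ← integral_indicator measurableSet_Icc]
  congr 1
  funext u
  by_cases hu : u ∈ Icc (0 : ℝ) 1
  · rw [indicator_of_mem hu, intervalIntegral.integral_of_le hu.2,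
      ← integral_Icc_eq_integral_Ioc, ← integral_indicator measurableSet_Icc]
    congr 1
    funext v
    simp [indicator_apply, hu.1]
  · rw [indicator_of_notMem hu]
    refine integral_eq_zero_of_ae (Filter.Eventually.of_forall fun v => ?_)
    exact indicator_of_notMem (fun h => hu ⟨h.1, h.2.1.trans h.2.2⟩) _

theorem setIntegral_unitTriangle_monomial (m n : ℕ) :
    ∫ p in unitTriangle, p.1 ^ m * p.2 ^ n = 1 / (((m : ℝ) + 1) * ((m : ℝ) + n + 2)) := by
  rw [setIntegral_unitTriangle (by fun_prop : Continuous _).integrableOn_unitTriangle]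
  have inner (u : ℝ) : ∫ v in u..1, u ^ m * v ^ n = (u ^ m - u ^ (m + n + 1)) / (n + 1) := by
    rw [intervalIntegral.integral_const_mul, integral_pow, one_pow]
    ring
  simp only [inner]
  rw [intervalIntegral.integral_div, intervalIntegral.integral_sub (by simp) (by simp),
    integral_pow, integral_pow]
  push_cast
  field_simp
  ring

theorem sub_sq_mul_s2 (l1 l2 : ℕ) (u v : ℝ) :
    (v - u) ^ 2 * s2 l1 l2 u v = (u - v) * (u ^ (l1 + 1) * v ^ l2 - v ^ (l1 + 1) * u ^ l2) := by
  rcases eq_or_ne u v with rfl | huv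
  · simp
  · rw [s2, ← neg_sub, neg_sq, sq, mul_assoc, mul_div_cancel₀ _ (sub_ne_zero.2 huv)]

/-- the expectation of `s_μ(a1,a2)/s_μ(1,1)` under the Jacobi-ensemble
density `ρ(a1,a2) = 12(a2−a1)²` on `{0 ≤ a1 ≤ a2 ≤ 1}` equals
`∏_{i=1}^2 i(i+1)/((μ_i−i+3)(μ_i−i+4))`. -/
theorem stmt14 (μ1 μ2 : ℕ) (hμ : μ2 ≤ μ1) :
    ∫ a in {p : ℝ × ℝ | 0 ≤ p.1 ∧ p.1 ≤ p.2 ∧ p.2 ≤ 1},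
        12 * (a.2 - a.1) ^ 2 * (s2 μ1 μ2 a.1 a.2 / ((μ1 : ℝ) - μ2 + 1)) =
      (2 / (((μ1 : ℝ) + 2) * ((μ1 : ℝ) + 3))) * (6 / (((μ2 : ℝ) + 1) * ((μ2 : ℝ) + 2))) := by
  have hdim : (μ1 : ℝ) - μ2 + 1 ≠ 0 := by
    have : (μ2 : ℝ) ≤ μ1 := by exact_mod_cast hμ
    linarith
  have expand (a : ℝ × ℝ) :
      12 * (a.2 - a.1) ^ 2 * (s2 μ1 μ2 a.1 a.2 / ((μ1 : ℝ) - μ2 + 1)) =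
        12 / ((μ1 : ℝ) - μ2 + 1) *
          (a.1 ^ (μ1 + 2) * a.2 ^ μ2 - a.1 ^ (μ2 + 1) * a.2 ^ (μ1 + 1) -
            (a.1 ^ (μ1 + 1) * a.2 ^ (μ2 + 1) - a.1 ^ μ2 * a.2 ^ (μ1 + 2))) := by
    rw [mul_div_assoc', mul_assoc, sub_sq_mul_s2]
    ring
  simp_rw [expand]
  rw [integral_const_mul, integral_sub, integral_sub, integral_sub]
  · simp only [setIntegral_unitTriangle_monomial]
    push_cast
    field_simp
    ring
  all_goals exact (by fun_prop : Continuous _).integrableOn_unitTriangle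
end

section
/- Let 0 < q < 1, let u_1, u_2 be distinct real numbers with 0 < u_i < q^{−1}, and let λ_1 ≥ λ_2 ≥ 0 be integers. Then the series Σ over all pairs of integers ν_1 ≥ ν_2 ≥ 0 of P(λ→ν) · s_{(ν_1,ν_2)}(u_1,u_2) / s_{(ν_1,ν_2)}(1,q) converges and equals [s_{(λ_1,λ_2)}(u_1,u_2) / s_{(λ_1,λ_2)}(1,q)] · ∏_{i=1}^{2} (1−q^i)(1−q^{i+1}) / ((1−u_i q)(1−u_i q²)). -/
/-!
Write `a = (ν₁ + 1, ν₂)` and `b = (λ₁ + 1, λ₂)`. Then `(u₁ - u₂) s_ν(u₁, u₂)` is the alternant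
`det [uᵢ ^ aⱼ]` and `s_{ν/λ}(x, y)` is the Jacobi–Trudi determinant `det [h_{aᵢ - bⱼ}(x, y)]`.
Since the latter is antisymmetric in `a`, the sum over `a₁ > a₂` of the product of the two
determinants equals the sum of `u₁ ^ a₁ u₂ ^ a₂ det [h_{aᵢ - bⱼ}]` over all pairs, which factors
into the one-row generating functions `∑ₐ uᵃ h_{a - b}(x, y) = u ^ b / ((1 - u x)(1 - u y))`.
This gives the skew Cauchy identity `∑_ν s_ν(u) s_{ν/λ}(x, y) = s_λ(u) ∏ᵢⱼ (1 - uᵢ xⱼ)⁻¹`, and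
the factors `s_ν(1, q)` cancel in `P(λ → ν) s_ν(u) / s_ν(1, q)`.
-/

open Finset

/-- Two-variable complete homogeneous symmetric polynomial
`h_d(x,y) = Σ_{i=0}^d x^i y^{d−i}` for `d ≥ 0`, and `h_d := 0` for `d < 0`. -/
noncomputable def h2 (d : ℤ) (x y : ℝ) : ℝ :=
  if d < 0 then 0 else ∑ i ∈ Finset.range (d.toNat + 1), x ^ i * y ^ (d.toNat - i)

/-- Two-variable skew Schur polynomial
`s_{ν/λ}(x,y) = h_{ν1−λ1} h_{ν2−λ2} − h_{ν1−λ2+1} h_{ν2−λ1−1}`. -/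
noncomputable def sskew2 (n1 n2 l1 l2 : ℕ) (x y : ℝ) : ℝ :=
  h2 ((n1 : ℤ) - l1) x y * h2 ((n2 : ℤ) - l2) x y -
    h2 ((n1 : ℤ) - l2 + 1) x y * h2 ((n2 : ℤ) - l1 - 1) x y

/-- The Markov transition weight
`P(λ→ν) = (1−q)(1−q²)²(1−q³) s_ν(1,q) s_{ν/λ}(q,q²) / s_λ(1,q)`. -/
noncomputable def Ptrans (q : ℝ) (l1 l2 n1 n2 : ℕ) : ℝ :=
  (1 - q) * (1 - q ^ 2) ^ 2 * (1 - q ^ 3) * s2 n1 n2 1 q * sskew2 n1 n2 l1 l2 q (q ^ 2) /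
    s2 l1 l2 1 q

lemma s2_mul_sub {u v : ℝ} (h : u ≠ v) (l₁ l₂ : ℕ) :
    s2 l₁ l₂ u v * (u - v) = u ^ (l₁ + 1) * v ^ l₂ - v ^ (l₁ + 1) * u ^ l₂ :=
  div_mul_cancel₀ _ (sub_ne_zero.mpr h)

lemma s2_one_pos {q : ℝ} (hq₀ : 0 < q) (hq₁ : q < 1) {l₁ l₂ : ℕ} (hl : l₂ ≤ l₁) :
    0 < s2 l₁ l₂ 1 q := by
  have : q ^ (l₁ + 1) < q ^ l₂ := pow_lt_pow_right_of_lt_one₀ hq₀ hq₁ (by omega)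
  rw [s2, one_pow, one_pow, one_mul, mul_one]
  exact div_pos (sub_pos.mpr this) (sub_pos.mpr hq₁)

lemma h2_of_neg {d : ℤ} (hd : d < 0) (x y : ℝ) : h2 d x y = 0 := if_pos hd

lemma pow_mul_h2_natCast (t x y : ℝ) (n : ℕ) :
    t ^ n * h2 n x y = ∑ i ∈ range (n + 1), (t * x) ^ i * (t * y) ^ (n - i) := by
  simp only [h2, Int.natCast_nonneg, not_lt.mpr, if_false, Int.toNat_natCast, mul_sum]
  refine sum_congr rfl fun i hi => ?_
  rw [← pow_mul_pow_sub t (Nat.le_of_lt_succ (mem_range.mp hi))]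
  ring

section GeneratingFunction

variable {t x y : ℝ}

lemma summable_norm_pow_mul_h2 (hx : |t * x| < 1) (hy : |t * y| < 1) :
    Summable fun n : ℕ => ‖t ^ n * h2 n x y‖ := by
  simpa only [pow_mul_h2_natCast] using summable_norm_sum_mul_range_of_summable_norm
    (summable_norm_geometric_of_norm_lt_one hx) (summable_norm_geometric_of_norm_lt_one hy)

lemma hasSum_pow_mul_h2 (hx : |t * x| < 1) (hy : |t * y| < 1) :
    HasSum (fun n : ℕ => t ^ n * h2 n x y) ((1 - t * x)⁻¹ * (1 - t * y)⁻¹) := by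
  have := hasSum_sum_range_mul_of_summable_norm (R := ℝ)
    (summable_norm_geometric_of_norm_lt_one hx) (summable_norm_geometric_of_norm_lt_one hy)
  rw [tsum_geometric_of_abs_lt_one hx, tsum_geometric_of_abs_lt_one hy] at this
  simpa only [pow_mul_h2_natCast] using this

lemma summable_norm_pow_mul_h2_sub (hx : |t * x| < 1) (hy : |t * y| < 1) (b : ℕ) :
    Summable fun a : ℕ => ‖t ^ a * h2 (a - b) x y‖ := by
  refine (summable_nat_add_iff b).mp ?_
  simpa [pow_add, mul_assoc, mul_left_comm] using
    (summable_norm_pow_mul_h2 hx hy).mul_left (|t| ^ b)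

lemma hasSum_pow_mul_h2_sub (hx : |t * x| < 1) (hy : |t * y| < 1) (b : ℕ) :
    HasSum (fun a : ℕ => t ^ a * h2 (a - b) x y)
      (t ^ b * ((1 - t * x)⁻¹ * (1 - t * y)⁻¹)) := by
  refine (hasSum_nat_add_iff' b).mp ?_
  rw [sum_eq_zero fun a ha => by rw [h2_of_neg (by simpa using ha), mul_zero], sub_zero]
  simpa [pow_add, mul_assoc, mul_comm, mul_left_comm] using
    (hasSum_pow_mul_h2 hx hy).mul_left (t ^ b)

end GeneratingFunction

lemma hasSum_pow_mul_h2_sub_mul {u v x y : ℝ} (hux : |u * x| < 1) (huy : |u * y| < 1)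
    (hvx : |v * x| < 1) (hvy : |v * y| < 1) (b c : ℕ) :
    HasSum (fun a : ℕ × ℕ => u ^ a.1 * h2 (a.1 - b) x y * (v ^ a.2 * h2 (a.2 - c) x y))
      (u ^ b * ((1 - u * x)⁻¹ * (1 - u * y)⁻¹) * (v ^ c * ((1 - v * x)⁻¹ * (1 - v * y)⁻¹))) := by
  have hu := hasSum_pow_mul_h2_sub hux huy b
  have hv := hasSum_pow_mul_h2_sub hvx hvy c
  have hs := summable_mul_of_summable_norm (summable_norm_pow_mul_h2_sub hux huy b)
    (summable_norm_pow_mul_h2_sub hvx hvy c)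
  exact (hu.mul hv hs :)

/-- In the shifted coordinates `a = (ν₁ + 1, ν₂)`, `b = (λ₁ + 1, λ₂)` this Jacobi–Trudi
determinant is the skew Schur polynomial `s_{ν/λ}`. -/
noncomputable def hDet (x y : ℝ) (b₁ b₂ a₁ a₂ : ℕ) : ℝ :=
  h2 (a₁ - b₁) x y * h2 (a₂ - b₂) x y - h2 (a₁ - b₂) x y * h2 (a₂ - b₁) x y

lemma sskew2_eq_hDet (n₁ n₂ l₁ l₂ : ℕ) (x y : ℝ) :
    sskew2 n₁ n₂ l₁ l₂ x y = hDet x y (l₁ + 1) l₂ (n₁ + 1) n₂ := by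
  simp only [sskew2, hDet]
  push_cast
  ring_nf

lemma hDet_swap (x y : ℝ) (b₁ b₂ a₁ a₂ : ℕ) :
    hDet x y b₁ b₂ a₂ a₁ = -hDet x y b₁ b₂ a₁ a₂ := by
  simp only [hDet]
  ring

lemma hDet_self (x y : ℝ) (b₁ b₂ a : ℕ) : hDet x y b₁ b₂ a a = 0 := by
  simp only [hDet]
  ring

lemma HasSum.ite_lt_add_swap {ι α : Type*} [LinearOrder ι] [AddCommGroup α] [UniformSpace α]
    [IsUniformAddGroup α] [CompleteSpace α] {g : ι × ι → α} {s : α} (hg : HasSum g s)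
    (hdiag : ∀ i, g (i, i) = 0) :
    HasSum (fun a => if a.2 < a.1 then g a + g a.swap else 0) s := by
  obtain ⟨σ, hA⟩ := hg.summable.indicator {a | a.2 < a.1}
  convert hA.add ((Equiv.prodComm ι ι).hasSum_iff.mpr (hg.sub hA)) using 1
  · ext ⟨i, j⟩
    rcases lt_trichotomy i j with h | rfl | h
    · simp [h, h.not_gt]
    · simp [hdiag]
    · simp [h, h.not_gt]
  · abel

lemma hasSum_ite_le_succ_iff {α : Type*} [AddCommMonoid α] [TopologicalSpace α]
    (f : ℕ × ℕ → α) {s : α} :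
    HasSum (fun n : ℕ × ℕ => if n.2 ≤ n.1 then f (n.1 + 1, n.2) else 0) s ↔
      HasSum (fun a : ℕ × ℕ => if a.2 < a.1 then f a else 0) s := by
  have hinj : Function.Injective fun n : ℕ × ℕ => (n.1 + 1, n.2) := by
    intro n m h
    simp only [Prod.mk.injEq, add_left_inj] at h
    exact Prod.ext h.1 h.2
  convert hinj.hasSum_iff (f := fun a : ℕ × ℕ => if a.2 < a.1 then f a else 0) ?_ using 2
  · ext n
    simp
  · rintro ⟨a₁, a₂⟩ ha
    refine if_neg fun h => ha ⟨(a₁ - 1, a₂), ?_⟩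
    simp only [Prod.mk.injEq, and_true]
    omega

lemma hasSum_pow_mul_pow_mul_hDet {u₁ u₂ x y : ℝ} (h₁x : |u₁ * x| < 1) (h₁y : |u₁ * y| < 1)
    (h₂x : |u₂ * x| < 1) (h₂y : |u₂ * y| < 1) (b₁ b₂ : ℕ) :
    HasSum (fun a : ℕ × ℕ => u₁ ^ a.1 * u₂ ^ a.2 * hDet x y b₁ b₂ a.1 a.2)
      ((u₁ ^ b₁ * u₂ ^ b₂ - u₁ ^ b₂ * u₂ ^ b₁) *
        ((1 - u₁ * x)⁻¹ * (1 - u₁ * y)⁻¹ * ((1 - u₂ * x)⁻¹ * (1 - u₂ * y)⁻¹))) := by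
  convert! (hasSum_pow_mul_h2_sub_mul h₁x h₁y h₂x h₂y b₁ b₂).sub
    (hasSum_pow_mul_h2_sub_mul h₁x h₁y h₂x h₂y b₂ b₁) using 1
  · ext a
    simp only [hDet]
    ring
  · ring

theorem hasSum_s2_mul_sskew2 {u₁ u₂ x y : ℝ} (hu : u₁ ≠ u₂) (h₁x : |u₁ * x| < 1)
    (h₁y : |u₁ * y| < 1) (h₂x : |u₂ * x| < 1) (h₂y : |u₂ * y| < 1) (l₁ l₂ : ℕ) :
    HasSum (fun n : ℕ × ℕ =>
        if n.2 ≤ n.1 then s2 n.1 n.2 u₁ u₂ * sskew2 n.1 n.2 l₁ l₂ x y else 0)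
      (s2 l₁ l₂ u₁ u₂ *
        ((1 - u₁ * x)⁻¹ * (1 - u₁ * y)⁻¹ * ((1 - u₂ * x)⁻¹ * (1 - u₂ * y)⁻¹))) := by
  have hsub : u₁ - u₂ ≠ 0 := sub_ne_zero.mpr hu
  have hfull := (hasSum_pow_mul_pow_mul_hDet h₁x h₁y h₂x h₂y (l₁ + 1) l₂).ite_lt_add_swap
    fun a => by rw [hDet_self, mul_zero]
  rw [← hasSum_ite_le_succ_iff] at hfull
  convert! hfull.div_const (u₁ - u₂) using 1
  · ext ⟨n₁, n₂⟩
    split_ifs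
    · dsimp only [Prod.swap_prod_mk]
      rw [hDet_swap _ _ _ _ (n₁ + 1) n₂, eq_div_iff hsub, sskew2_eq_hDet, mul_right_comm,
        s2_mul_sub hu]
      ring
    · rw [zero_div]
  · rw [eq_div_iff hsub, mul_right_comm, s2_mul_sub hu]
    ring

lemma abs_mul_pow_lt_one {u q : ℝ} (hu : 0 < u) (hq₀ : 0 < q) (hq₁ : q < 1) (huq : u < q⁻¹)
    {k : ℕ} (hk : k ≠ 0) : |u * q ^ k| < 1 := by
  rw [abs_of_pos (by positivity)]
  calc u * q ^ k ≤ u * q := by gcongr; exact pow_le_of_le_one hq₀.le hq₁.le hk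
    _ < q⁻¹ * q := by gcongr
    _ = 1 := inv_mul_cancel₀ hq₀.ne'

theorem stmt15_general (q u1 u2 : ℝ) (hq0 : 0 < q) (hq1 : q < 1) (hne : u1 ≠ u2)
    (hu1 : 0 < u1) (hu1q : u1 < q⁻¹) (hu2 : 0 < u2) (hu2q : u2 < q⁻¹)
    (l1 l2 : ℕ) :
    HasSum
      (fun nu : ℕ × ℕ =>
        if nu.2 ≤ nu.1 then
          Ptrans q l1 l2 nu.1 nu.2 * s2 nu.1 nu.2 u1 u2 / s2 nu.1 nu.2 1 q
        else 0)
      ((s2 l1 l2 u1 u2 / s2 l1 l2 1 q) *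
        (((1 - q) * (1 - q ^ 2) / ((1 - u1 * q) * (1 - u1 * q ^ 2))) *
          ((1 - q ^ 2) * (1 - q ^ 3) / ((1 - u2 * q) * (1 - u2 * q ^ 2))))) := by
  have h₁ : |u1 * q| < 1 := by simpa using abs_mul_pow_lt_one hu1 hq0 hq1 hu1q one_ne_zero
  have h₂ : |u2 * q| < 1 := by simpa using abs_mul_pow_lt_one hu2 hq0 hq1 hu2q one_ne_zero
  have h₁' := abs_mul_pow_lt_one hu1 hq0 hq1 hu1q two_ne_zero
  have h₂' := abs_mul_pow_lt_one hu2 hq0 hq1 hu2q two_ne_zero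
  convert! (hasSum_s2_mul_sskew2 hne h₁ h₁' h₂ h₂' l1 l2).mul_left
    ((1 - q) * (1 - q ^ 2) ^ 2 * (1 - q ^ 3) / s2 l1 l2 1 q) using 1
  · ext ⟨n₁, n₂⟩
    split_ifs with hn
    · have := (s2_one_pos hq0 hq1 hn).ne'
      rw [Ptrans]
      field_simp
    · rw [mul_zero]
  · simp only [div_eq_mul_inv, mul_inv]
    ring

/-- the one-step evaluation equation (skew Cauchy identity) for the Markov
transition weights `P(λ→ν)`. -/
theorem stmt15 (q u1 u2 : ℝ) (hq0 : 0 < q) (hq1 : q < 1) (hne : u1 ≠ u2)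
    (hu1 : 0 < u1) (hu1q : u1 < q⁻¹) (hu2 : 0 < u2) (hu2q : u2 < q⁻¹)
    (l1 l2 : ℕ) (hl : l2 ≤ l1) :
    HasSum
      (fun nu : ℕ × ℕ =>
        if nu.2 ≤ nu.1 then
          Ptrans q l1 l2 nu.1 nu.2 * s2 nu.1 nu.2 u1 u2 / s2 nu.1 nu.2 1 q
        else 0)
      ((s2 l1 l2 u1 u2 / s2 l1 l2 1 q) *
        (((1 - q) * (1 - q ^ 2) / ((1 - u1 * q) * (1 - u1 * q ^ 2))) *
          ((1 - q ^ 2) * (1 - q ^ 3) / ((1 - u2 * q) * (1 - u2 * q ^ 2))))) :=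
  stmt15_general q u1 u2 hq0 hq1 hne hu1 hu1q hu2 hu2q l1 l2
end
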